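/- Let {a_j}_{j∈ℕ} ⊂ 𝔻 be a Blaschke sequence (∑_j(1−|a_j|) < ∞) with simple points, let B be the corresponding Blaschke product, and suppose inf_j |B'(a_j)|·(1−|a_j|) > 0. Given {w_j} ∈ ℓ^∞, define h(z) := ∑_j (B(z)/b_j(z)) · (w_j/B_j(a_j)) · (1−|a_j|²)/(1−conj(a_j)·z), where b_j is the Blaschke factor with zero a_j and B_j := B/b_j. Then h(a_k) = w_k for every k. -/

import Mathlib

open Complex Metric

/-- Normalized Blaschke factor with zero `a`, with the convention `|a|/a = -1` for `a = 0`. -/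
noncomputable def blaschkeFactor (a z : ℂ) : ℂ :=
  (if a = 0 then -1 else ((‖a‖ : ℝ) : ℂ) / a) * ((a - z) / (1 - (starRingEnd ℂ) a * z))

theorem one_sub_conj_mul_self (a : ℂ) :
    1 - (starRingEnd ℂ) a * a = ((1 - ‖a‖ ^ 2 : ℝ) : ℂ) := by
  rw [mul_comm, mul_conj']
  push_cast
  ring

theorem normalized_kernel_diag_eq_one {a : ℂ} (ha : ‖a‖ < 1) :
    ((1 - ‖a‖ ^ 2 : ℝ) : ℂ) / (1 - (starRingEnd ℂ) a * a) = 1 := by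
  have hpos : (0 : ℝ) < 1 - ‖a‖ ^ 2 := by nlinarith [norm_nonneg a]
  rw [one_sub_conj_mul_self, div_self (ofReal_ne_zero.mpr hpos.ne')]

theorem interpolating_series_interpolates_general
    (a : ℕ → ℂ) (hball : ∀ j, ‖a j‖ < 1)
    (Bj : ℕ → ℂ → ℂ)
    (hBjzero : ∀ j k, j ≠ k → Bj j (a k) = 0)
    (hBjne : ∀ j, Bj j (a j) ≠ 0)
    (w : ℕ → ℂ) :
    ∀ k, (∑' j, Bj j (a k) * (w j / Bj j (a j))
            * (((1 - ‖a j‖^2 : ℝ) : ℂ) / (1 - (starRingEnd ℂ) (a j) * a k))) = w k := by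
  intro k
  rw [tsum_eq_single k fun j hj => by rw [hBjzero j k hj, zero_mul, zero_mul],
    normalized_kernel_diag_eq_one (hball k), mul_one, mul_div_cancel₀ _ (hBjne k)]

theorem interpolating_series_interpolates
    (a : ℕ → ℂ) (hball : ∀ j, ‖a j‖ < 1)
    (hbl : Summable (fun j => 1 - ‖a j‖))
    (hinj : Function.Injective a)
    (B : ℂ → ℂ) (hB : DifferentiableOn ℂ B (ball (0:ℂ) 1))
    (Bj : ℕ → ℂ → ℂ)
    (hBj : ∀ j, ∀ z ∈ ball (0:ℂ) 1, B z = Bj j z * blaschkeFactor (a j) z)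
    (hBjhol : ∀ j, DifferentiableOn ℂ (Bj j) (ball (0:ℂ) 1))
    (hBjzero : ∀ j k, j ≠ k → Bj j (a k) = 0)
    (hBjne : ∀ j, Bj j (a j) ≠ 0)
    (hδ : 0 < ⨅ j, ‖deriv B (a j)‖ * (1 - ‖a j‖))
    (w : ℕ → ℂ) (hw : ∃ M : ℝ, ∀ j, ‖w j‖ ≤ M) :
    ∀ k, (∑' j, Bj j (a k) * (w j / Bj j (a j))
            * (((1 - ‖a j‖^2 : ℝ) : ℂ) / (1 - (starRingEnd ℂ) (a j) * a k))) = w k :=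
  interpolating_series_interpolates_general a hball Bj hBjzero hBjne w
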